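/- arXiv:1707.05752 — 4 statements merged into one kernel-verified Lean document; each statement's English description precedes it below -/
import Mathlib

section
/- Let C be a triangulated category equipped with a bounded t-structure t, with heart C^{t=0} and cohomology functors H^m : C → C^{t=0} (m ∈ ℤ). Let M and N be objects of C, and α : M → N a morphism such that H^m(α) = 0 for all m ∈ ℤ. Then α belongs to the radical rad_C(M,N); that is, for every morphism β : N → M the endomorphism id_M − β∘α of M is an isomorphism. (Proposition 1.D) -/
open CategoryTheory Limits Pretriangulated ZeroObject

namespace Absolute

universe v u

/-- The radical of a preadditive category: `α : M ⟶ N` belongs to the radical if and only if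
for every `β : N ⟶ M`, the endomorphism `𝟙 M - β ∘ α` of `M` is an isomorphism. -/
def radical {C : Type u} [Category.{v} C] [Preadditive C] (M N : C) : Set (M ⟶ N) :=
  {α | ∀ β : N ⟶ M, IsIso (𝟙 M - α ≫ β)}

variable (C : Type u) [Category.{v} C] [Preadditive C] [HasZeroObject C]
  [HasShift C ℤ] [∀ n : ℤ, (shiftFunctor C n).Additive] [Pretriangulated C]

/-- A bounded t-structure `t` on a triangulated category `C`, given by the classes
`tle n = C^{t ≤ n}` and `tge n = C^{t ≥ n}`, together with its truncation functors and
the associated cohomology functors `H m` with values in the heart `C^{t = 0}`. -/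
structure BoundedTStructure where
  tle : ℤ → Set C
  tge : ℤ → Set C
  tle_iso : ∀ (n : ℤ) ⦃X Y : C⦄, (X ≅ Y) → X ∈ tle n → Y ∈ tle n
  tge_iso : ∀ (n : ℤ) ⦃X Y : C⦄, (X ≅ Y) → X ∈ tge n → Y ∈ tge n
  /-- `C^{t ≤ n} := C^{t ≤ 0}[-n]`, i.e. the cohomological indexing convention -/
  tle_shift : ∀ (n k : ℤ) (X : C), X ∈ tle n ↔ X⟦k⟧ ∈ tle (n - k)
  tge_shift : ∀ (n k : ℤ) (X : C), X ∈ tge n ↔ X⟦k⟧ ∈ tge (n - k)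
  tle_mono : ∀ n : ℤ, tle n ⊆ tle (n + 1)
  tge_anti : ∀ n : ℤ, tge (n + 1) ⊆ tge n
  t_orth : ∀ ⦃X Y : C⦄, X ∈ tle 0 → Y ∈ tge 1 → ∀ f : X ⟶ Y, f = 0
  t_bounded : ∀ M : C, ∃ m n : ℤ, M ∈ tge m ∧ M ∈ tle n
  /-- truncation functor `τ^{t ≤ m}` -/
  τle : ℤ → C ⥤ C
  /-- truncation functor `τ^{t ≥ m}` -/
  τge : ℤ → C ⥤ C
  τle_mem : ∀ (m : ℤ) (X : C), (τle m).obj X ∈ tle m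
  τge_mem : ∀ (m : ℤ) (X : C), (τge m).obj X ∈ tge m
  τleε : ∀ m : ℤ, τle m ⟶ 𝟭 C
  τgeη : ∀ m : ℤ, 𝟭 C ⟶ τge m
  τ_triangle : ∀ (m : ℤ) (X : C), ∃ h : (τge (m + 1)).obj X ⟶ ((τle m).obj X)⟦(1 : ℤ)⟧,
    Triangle.mk ((τleε m).app X) ((τgeη (m + 1)).app X) h ∈ distTriang C
  /-- the cohomology functors `H^m : C ⥤ C^{t = 0}`, viewed as endofunctors of `C` with
  values in the heart -/
  H : ℤ → C ⥤ C
  H_additive : ∀ m : ℤ, (H m).Additive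
  H_heart : ∀ (m : ℤ) (X : C), (H m).obj X ∈ tle 0 ∧ (H m).obj X ∈ tge 0
  H_shift : ∀ m : ℤ, Nonempty (shiftFunctor C (1 : ℤ) ⋙ H m ≅ H (m + 1))
  H_heart_id : ∀ X : C, X ∈ tle 0 → X ∈ tge 0 → Nonempty ((H 0).obj X ≅ X)
  H_vanish_le : ∀ (m n : ℤ) (X : C), X ∈ tle n → n < m → IsZero ((H m).obj X)
  H_vanish_ge : ∀ (m n : ℤ) (X : C), X ∈ tge n → m < n → IsZero ((H m).obj X)
  /-- the family of cohomology functors associated to a bounded t-structure is conservative -/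
  H_conservative : ∀ ⦃X Y : C⦄ (f : X ⟶ Y), (∀ m : ℤ, IsIso ((H m).map f)) → IsIso f

/-- The intersection `C^{t = m} = C^{t ≤ m} ∩ C^{t ≥ m}`. -/
def BoundedTStructure.tEq (t : BoundedTStructure C) (m : ℤ) : Set C :=
  t.tle m ∩ t.tge m

theorem _root_.CategoryTheory.Functor.map_id_sub_comp_eq_id_of_map_eq_zero
    {𝒜 : Type*} {ℬ : Type*} [Category 𝒜] [Category ℬ] [Preadditive 𝒜] [Preadditive ℬ]
    (F : 𝒜 ⥤ ℬ) [F.Additive] {M N : 𝒜} {α : M ⟶ N} (hα : F.map α = 0) (β : N ⟶ M) :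
    F.map (𝟙 M - α ≫ β) = 𝟙 (F.obj M) := by
  rw [F.map_sub, F.map_id, F.map_comp, hα, zero_comp, sub_zero]

/-- Proposition 1.D: if `C` carries a bounded t-structure with cohomology functors `H^m`,
and `α : M ⟶ N` satisfies `H^m(α) = 0` for all `m ∈ ℤ`, then `α` belongs to the radical
`rad_C(M, N)`; that is, for every `β : N ⟶ M`, the endomorphism `𝟙 M - β ∘ α` of `M`
is an isomorphism. -/
theorem proposition_1D (t : BoundedTStructure C) (M N : C) (α : M ⟶ N)
    (h : ∀ m : ℤ, (t.H m).map α = 0) :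
    α ∈ radical M N := by
  intro β
  refine t.H_conservative _ fun m => ?_
  have := t.H_additive m
  rw [(t.H m).map_id_sub_comp_eq_id_of_map_eq_zero (h m) β]
  infer_instance

end Absolute
end

section
/- Let C be a triangulated category carrying a bounded weight structure w and a bounded t-structure t satisfying the transversality properties (a)–(d). Let r, n ∈ ℤ, let M be an object of C^{t=r} ∩ C_{w≥n} and N an object of C^{t=r} ∩ C_{w≤n}, and let γ : M → N be a nonzero morphism. Then there exists β : N → M such that β∘γ is a nonzero idempotent endomorphism of M (a projector onto a nonzero direct factor of M); in particular γ does not belong to rad_C(M,N). (Claim (∗) in the proof of Theorem 1.F) -/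
/-!
Filter `M` by weights at `n + 1` and `N` at `n` inside `C^{t=r}`, using (c):
`M' → M → M''` and `N' → N → N''`, so that `M'` and `N''` lie in `C_{w=n}^{t=r}`.
Inside `C^{t=r}` every map from weights `≥ a` to weights `≤ b < a` vanishes: induct on the
length of the weight range, splitting off the top pure piece with (c) and killing maps between
pure pieces with (b). Hence `φ : M' → M → N → N''` is nonzero. In the semisimple abelian
category `C_{w=n}^{t=r}` the map `φ` has a generalized inverse `ψ`, and going back along
`N → N'' → M' → M` through `ψ φ ψ` gives `β` with `γ ≫ β` a nonzero idempotent; for such an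
idempotent `e`, `(1 - e) ≫ e = 0` shows that `1 - e` is not invertible.
-/

open CategoryTheory Limits Pretriangulated ZeroObject

namespace Absolute

universe v u

/-- Full subcategories of preadditive categories are preadditive. -/
instance fullSubcategoryPreadditive {C : Type u} [Category.{v} C] [Preadditive C]
    (Z : C → Prop) : Preadditive (ObjectProperty.FullSubcategory Z) where
  homGroup X Y := InducedCategory.homEquiv.addCommGroup
  add_comp _ _ _ f f' g := by ext; exact Preadditive.add_comp _ _ _ f.hom f'.hom g.hom
  comp_add _ _ _ f g g' := by ext; exact Preadditive.comp_add _ _ _ f.hom g.hom g'.hom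

/-- The property that morphisms `f : A ⟶ M` and `g : M ⟶ B` between objects satisfying `Z`
form a short exact sequence `0 ⟶ A ⟶ M ⟶ B ⟶ 0` in the full subcategory of objects
satisfying `Z`. -/
def IsShortExactInSub {C : Type u} [Category.{v} C] [Preadditive C] (Z : C → Prop)
    {A M B : C} (hA : Z A) (hM : Z M) (hB : Z B) (f : A ⟶ M) (g : M ⟶ B) : Prop :=
  let A' : ObjectProperty.FullSubcategory Z := ⟨A, hA⟩
  let M' : ObjectProperty.FullSubcategory Z := ⟨M, hM⟩
  let B' : ObjectProperty.FullSubcategory Z := ⟨B, hB⟩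
  let f' : A' ⟶ M' := ObjectProperty.homMk f
  let g' : M' ⟶ B' := ObjectProperty.homMk g
  Mono f' ∧ Epi g' ∧ ∃ w : f' ≫ g' = 0, (ShortComplex.mk f' g' w).Exact

variable (C : Type u) [Category.{v} C] [Preadditive C] [HasZeroObject C]
  [HasShift C ℤ] [∀ n : ℤ, (shiftFunctor C n).Additive] [Pretriangulated C]

/-- A bounded weight structure `w` on a triangulated category `C`, given by the classes
`wle n = C_{w ≤ n}` and `wge n = C_{w ≥ n}`. -/
structure BoundedWeightStructure where
  wle : ℤ → Set C
  wge : ℤ → Set C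
  wle_iso : ∀ (n : ℤ) ⦃X Y : C⦄, (X ≅ Y) → X ∈ wle n → Y ∈ wle n
  wge_iso : ∀ (n : ℤ) ⦃X Y : C⦄, (X ≅ Y) → X ∈ wge n → Y ∈ wge n
  wle_summand : ∀ (n : ℤ) ⦃X Y : C⦄ (i : X ⟶ Y) (r : Y ⟶ X),
    i ≫ r = 𝟙 X → Y ∈ wle n → X ∈ wle n
  wge_summand : ∀ (n : ℤ) ⦃X Y : C⦄ (i : X ⟶ Y) (r : Y ⟶ X),
    i ≫ r = 𝟙 X → Y ∈ wge n → X ∈ wge n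
  wle_zero : (0 : C) ∈ wle 0
  wge_zero : (0 : C) ∈ wge 0
  /-- `C_{w ≤ n} := C_{w ≤ 0}[n]` -/
  wle_shift : ∀ (n k : ℤ) (X : C), X ∈ wle n ↔ X⟦k⟧ ∈ wle (n + k)
  wge_shift : ∀ (n k : ℤ) (X : C), X ∈ wge n ↔ X⟦k⟧ ∈ wge (n + k)
  wle_mono : ∀ n : ℤ, wle n ⊆ wle (n + 1)
  wge_anti : ∀ n : ℤ, wge (n + 1) ⊆ wge n
  w_orth : ∀ ⦃X Y : C⦄, X ∈ wle 0 → Y ∈ wge 1 → ∀ f : X ⟶ Y, f = 0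
  w_dec : ∀ M : C, ∃ (A B : C) (f : A ⟶ M) (g : M ⟶ B) (h : B ⟶ A⟦(1 : ℤ)⟧),
    Triangle.mk f g h ∈ (distTriang C) ∧ A ∈ wle 0 ∧ B ∈ wge 1
  w_bounded : ∀ M : C, ∃ m n : ℤ, M ∈ wge m ∧ M ∈ wle n

/-- The heart `C_{w = n}` of a (bounded) weight structure. -/
def BoundedWeightStructure.wEq (w : BoundedWeightStructure C) (n : ℤ) : Set C :=
  w.wle n ∩ w.wge n

variable [HasFiniteBiproducts C]

/-- A bounded weight structure and a bounded t-structure on `C` satisfying the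
transversality properties (a)–(d). -/
structure TransversalPackage extends BoundedWeightStructure C, BoundedTStructure C where
  /-- (a): each `C_{w = n}^{t = m}` is abelian ... -/
  wt_abelian : ∀ (n m : ℤ),
    Abelian (ObjectProperty.FullSubcategory (fun X : C => (X ∈ wle n ∧ X ∈ wge n) ∧ (X ∈ tle m ∧ X ∈ tge m)))
  /-- (a): ... and semisimple (every monomorphism splits) ... -/
  wt_semisimple : ∀ (n m : ℤ)
    ⦃X Y : ObjectProperty.FullSubcategory (fun X : C => (X ∈ wle n ∧ X ∈ wge n) ∧ (X ∈ tle m ∧ X ∈ tge m))⦄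
    (f : X ⟶ Y), Mono f → ∃ r : Y ⟶ X, f ≫ r = 𝟙 X
  /-- (a): ... and every object of `C_{w = 0}` is isomorphic to a finite direct sum of
  objects of the categories `C_{w = 0}^{t = m}`, `m ∈ ℤ` -/
  wheart_sum : ∀ X : C, X ∈ wle 0 → X ∈ wge 0 →
    ∃ (k : ℕ) (Y : Fin k → C) (m : Fin k → ℤ),
      (∀ i, (Y i ∈ wle 0 ∧ Y i ∈ wge 0) ∧ (Y i ∈ tle (m i) ∧ Y i ∈ tge (m i))) ∧
      Nonempty (X ≅ ⨁ Y)
  /-- (b): for fixed `m` and `n₁ ≠ n₂`, every morphism from an object of `C_{w = n₁}^{t = m}`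
  to an object of `C_{w = n₂}^{t = m}` is zero -/
  wt_hom_vanish : ∀ (m n₁ n₂ : ℤ), n₁ ≠ n₂ → ∀ ⦃X Y : C⦄,
    X ∈ wle n₁ → X ∈ wge n₁ → X ∈ tle m → X ∈ tge m →
    Y ∈ wle n₂ → Y ∈ wge n₂ → Y ∈ tle m → Y ∈ tge m → ∀ f : X ⟶ Y, f = 0
  /-- (c): every object of `C^{t = m}` admits weight filtrations concentrated at any `n`,
  with outer terms in `C^{t = m}`, which are short exact sequences in `C^{t = m}` -/
  t_weight_filtration : ∀ (m n : ℤ) (M : C) (hM : M ∈ tle m ∧ M ∈ tge m),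
    ∃ (A B : C) (hA : A ∈ tle m ∧ A ∈ tge m) (hB : B ∈ tle m ∧ B ∈ tge m)
      (f : A ⟶ M) (g : M ⟶ B) (δ : B ⟶ A⟦(1 : ℤ)⟧),
      Triangle.mk f g δ ∈ (distTriang C) ∧ A ∈ wle (n - 1) ∧ B ∈ wge n ∧
      IsShortExactInSub (fun X : C => X ∈ tle m ∧ X ∈ tge m) hA hM hB f g
  /-- (d): the truncation functors preserve `C_{w ≤ n}` and `C_{w ≥ n}` -/
  τle_wle : ∀ (m n : ℤ) (X : C), X ∈ wle n → (τle m).obj X ∈ wle n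
  τle_wge : ∀ (m n : ℤ) (X : C), X ∈ wge n → (τle m).obj X ∈ wge n
  τge_wle : ∀ (m n : ℤ) (X : C), X ∈ wle n → (τge m).obj X ∈ wle n
  τge_wge : ∀ (m n : ℤ) (X : C), X ∈ wge n → (τge m).obj X ∈ wge n

end Absolute

namespace Absolute

open ShortComplex

section Regularity

variable {A : Type*} [Category A] [Abelian A]

theorem isSplitEpi_of_epi (hs : ∀ ⦃X Y : A⦄ (f : X ⟶ Y), Mono f → ∃ r, f ≫ r = 𝟙 X)
    {X Y : A} (e : X ⟶ Y) [Epi e] : IsSplitEpi e := by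
  obtain ⟨r, hr⟩ := hs (kernel.ι e) inferInstance
  exact ⟨⟨_, (Splitting.ofExactOfRetraction _ (kernelSequence_exact e) r hr ‹_›).s_g⟩⟩

theorem exists_comp_comp_eq_self (hs : ∀ ⦃X Y : A⦄ (f : X ⟶ Y), Mono f → ∃ r, f ≫ r = 𝟙 X)
    {X Y : A} (φ : X ⟶ Y) : ∃ ψ : Y ⟶ X, φ ≫ ψ ≫ φ = φ := by
  obtain ⟨r, hr⟩ := hs (Abelian.image.ι φ) inferInstance
  have := isSplitEpi_of_epi hs (Abelian.factorThruImage φ)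
  refine ⟨r ≫ section_ (Abelian.factorThruImage φ), ?_⟩
  calc φ ≫ (r ≫ section_ _) ≫ φ
      = (Abelian.factorThruImage φ ≫ Abelian.image.ι φ) ≫ (r ≫ section_ _) ≫
          Abelian.factorThruImage φ ≫ Abelian.image.ι φ := by rw [Abelian.image.fac]
    _ = Abelian.factorThruImage φ ≫ Abelian.image.ι φ := by
      simp only [Category.assoc, reassoc_of% hr, IsSplitEpi.id_assoc]
    _ = φ := Abelian.image.fac φ

end Regularity

theorem exists_idempotent_ne_zero_of_comp_comp_eq_self {C : Type*} [Category C]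
    [HasZeroMorphisms C] {M N M' N' : C} {γ : M ⟶ N} {f : M' ⟶ M} {g : N ⟶ N'} {ψ : N' ⟶ M'}
    (hψ : (f ≫ γ ≫ g) ≫ ψ ≫ f ≫ γ ≫ g = f ≫ γ ≫ g) (hne : f ≫ γ ≫ g ≠ 0) :
    ∃ β : N ⟶ M, (γ ≫ β) ≫ (γ ≫ β) = γ ≫ β ∧ γ ≫ β ≠ 0 := by
  simp only [Category.assoc] at hψ
  -- `β` is built from the reflexive generalized inverse `ψ ≫ φ ≫ ψ` of `φ = f ≫ γ ≫ g`.
  refine ⟨g ≫ ψ ≫ f ≫ γ ≫ g ≫ ψ ≫ f, by simp [reassoc_of% hψ], fun h => hne ?_⟩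
  calc f ≫ γ ≫ g = f ≫ γ ≫ g ≫ ψ ≫ (f ≫ γ ≫ g ≫ ψ ≫ f ≫ γ ≫ g) := by rw [hψ, hψ]
    _ = f ≫ (γ ≫ g ≫ ψ ≫ f ≫ γ ≫ g ≫ ψ ≫ f) ≫ γ ≫ g := by simp only [Category.assoc]
    _ = 0 := by rw [h]; simp

theorem not_mem_radical_of_idempotent {C : Type*} [Category C] [Preadditive C] {M N : C}
    {γ : M ⟶ N} {β : N ⟶ M} (hidem : (γ ≫ β) ≫ (γ ≫ β) = γ ≫ β) (hne : γ ≫ β ≠ 0) :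
    γ ∉ radical M N := fun hrad => by
  have := hrad β
  exact hne ((cancel_epi (𝟙 M - γ ≫ β)).1 (by rw [Preadditive.sub_comp, hidem]; simp))

section Weights

variable {C : Type*} [Category C] [Preadditive C] [HasZeroObject C] [HasShift C ℤ]
  [∀ n : ℤ, (shiftFunctor C n).Additive] [Pretriangulated C]

namespace BoundedWeightStructure

variable (w : BoundedWeightStructure C)

theorem wle_monotone : Monotone w.wle := monotone_int_of_le_succ w.wle_mono

theorem wge_antitone : Antitone w.wge := antitone_int_of_succ_le w.wge_anti

theorem obj₂_mem_wle_zero_of_distTriang (T : Triangle C) (hT : T ∈ distTriang C)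
    (h₁ : T.obj₁ ∈ w.wle 0) (h₃ : T.obj₃ ∈ w.wle 0) : T.obj₂ ∈ w.wle 0 := by
  obtain ⟨A, B, f, g, h, hd, hA, hB⟩ := w.w_dec T.obj₂
  have hg : g = 0 := by
    obtain ⟨v, rfl⟩ := Triangle.yoneda_exact₂ T hT g (w.w_orth h₁ hB _)
    rw [w.w_orth h₃ hB v, comp_zero]
  obtain ⟨s, hs⟩ := Triangle.coyoneda_exact₂ _ hd (𝟙 T.obj₂)
    (by simp only [Triangle.mk_mor₂, hg]; exact comp_zero)
  exact w.wle_summand 0 s f hs.symm hA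

theorem obj₂_mem_wge_one_of_distTriang (T : Triangle C) (hT : T ∈ distTriang C)
    (h₁ : T.obj₁ ∈ w.wge 1) (h₃ : T.obj₃ ∈ w.wge 1) : T.obj₂ ∈ w.wge 1 := by
  obtain ⟨A, B, f, g, h, hd, hA, hB⟩ := w.w_dec T.obj₂
  have hf : f = 0 := by
    obtain ⟨u, rfl⟩ := Triangle.coyoneda_exact₂ T hT f (w.w_orth hA h₃ _)
    rw [w.w_orth hA h₁ u, zero_comp]
  obtain ⟨s, hs⟩ := Triangle.yoneda_exact₂ _ hd (𝟙 T.obj₂)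
    (by simp only [Triangle.mk_mor₁, hf]; exact zero_comp)
  exact w.wge_summand 1 g s hs.symm hB

theorem obj₂_mem_wle_of_distTriang (n : ℤ) (T : Triangle C) (hT : T ∈ distTriang C)
    (h₁ : T.obj₁ ∈ w.wle n) (h₃ : T.obj₃ ∈ w.wle n) : T.obj₂ ∈ w.wle n := by
  have hshift : ∀ X : C, X ∈ w.wle n ↔ X⟦-n⟧ ∈ w.wle 0 := fun X => by
    simpa using w.wle_shift n (-n) X
  rw [hshift] at h₁ h₃ ⊢
  exact w.obj₂_mem_wle_zero_of_distTriang _ (Triangle.shift_distinguished T hT (-n)) h₁ h₃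

theorem obj₂_mem_wge_of_distTriang (n : ℤ) (T : Triangle C) (hT : T ∈ distTriang C)
    (h₁ : T.obj₁ ∈ w.wge n) (h₃ : T.obj₃ ∈ w.wge n) : T.obj₂ ∈ w.wge n := by
  have hshift : ∀ X : C, X ∈ w.wge n ↔ X⟦1 - n⟧ ∈ w.wge 1 := fun X => by
    simpa using w.wge_shift n (1 - n) X
  rw [hshift] at h₁ h₃ ⊢
  exact w.obj₂_mem_wge_one_of_distTriang _ (Triangle.shift_distinguished T hT (1 - n)) h₁ h₃

theorem obj₃_mem_wle_of_distTriang (n : ℤ) (T : Triangle C) (hT : T ∈ distTriang C)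
    (h₁ : T.obj₁ ∈ w.wle n) (h₂ : T.obj₂ ∈ w.wle (n + 1)) : T.obj₃ ∈ w.wle (n + 1) :=
  w.obj₂_mem_wle_of_distTriang (n + 1) _ (rot_of_distTriang T hT) h₂ ((w.wle_shift n 1 _).1 h₁)

theorem obj₁_mem_wge_of_distTriang (n : ℤ) (T : Triangle C) (hT : T ∈ distTriang C)
    (h₂ : T.obj₂ ∈ w.wge n) (h₃ : T.obj₃ ∈ w.wge (n + 1)) : T.obj₁ ∈ w.wge n :=
  w.obj₂_mem_wge_of_distTriang n _ (inv_rot_of_distTriang T hT)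
    (by simpa using (w.wge_shift (n + 1) (-1) _).1 h₃) h₂

end BoundedWeightStructure

namespace TransversalPackage

variable [HasFiniteBiproducts C] (P : TransversalPackage C) {r : ℤ}

theorem exists_weight_filtration (n : ℤ) {X : C} (hX : X ∈ P.tEq C r) :
    ∃ (A B : C) (f : A ⟶ X) (g : X ⟶ B) (δ : B ⟶ A⟦(1 : ℤ)⟧),
      Triangle.mk f g δ ∈ distTriang C ∧ A ∈ P.tEq C r ∧ B ∈ P.tEq C r ∧
        A ∈ P.wle n ∧ B ∈ P.wge (n + 1) := by
  obtain ⟨A, B, hA, hB, f, g, δ, hT, hAw, hBw, -⟩ := P.t_weight_filtration r (n + 1) X hX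
  exact ⟨A, B, f, g, δ, hT, hA, hB, by simpa using hAw, hBw⟩

theorem eq_zero_of_wEq_of_wle_of_wge {a b m : ℤ} (hmb : m ≤ b) (hab : b < a) {X Y : C}
    (hX : X ∈ P.wEq C a) (hXt : X ∈ P.tEq C r) (hYle : Y ∈ P.wle b) (hYge : Y ∈ P.wge m)
    (hYt : Y ∈ P.tEq C r) (f : X ⟶ Y) : f = 0 := by
  induction b, hmb using Int.leInduction generalizing a Y with
  | base => exact P.wt_hom_vanish r a m hab.ne' hX.1 hX.2 hXt.1 hXt.2 hYle hYge hYt.1 hYt.2 f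
  | succ b hmb ih =>
    obtain ⟨A, B, i, p, δ, hT, hAt, hBt, hAle, hBge⟩ := P.exists_weight_filtration b hYt
    have hBle : B ∈ P.wle (b + 1) := P.obj₃_mem_wle_of_distTriang b _ hT hAle hYle
    have hAge : A ∈ P.wge m :=
      P.obj₁_mem_wge_of_distTriang m _ hT hYge (P.wge_antitone (by omega) hBge)
    obtain ⟨v, rfl⟩ := Triangle.coyoneda_exact₂ _ hT f
      (P.wt_hom_vanish r a (b + 1) hab.ne' hX.1 hX.2 hXt.1 hXt.2 hBle hBge hBt.1 hBt.2 _)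
    rw [ih (by omega) hX hAle hAge hAt v]; exact zero_comp

theorem eq_zero_of_wEq_of_wle {a b : ℤ} (hab : b < a) {X Y : C} (hX : X ∈ P.wEq C a)
    (hXt : X ∈ P.tEq C r) (hY : Y ∈ P.wle b) (hYt : Y ∈ P.tEq C r) (f : X ⟶ Y) : f = 0 := by
  obtain ⟨m, -, hm, -⟩ := P.w_bounded Y
  exact P.eq_zero_of_wEq_of_wle_of_wge (min_le_right m b) hab hX hXt hY
    (P.wge_antitone (min_le_left m b) hm) hYt f

theorem eq_zero_of_wge_of_wle_of_wle {a b K : ℤ} (haK : a ≤ K) (hab : b < a) {X Y : C}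
    (hXge : X ∈ P.wge a) (hXle : X ∈ P.wle K) (hXt : X ∈ P.tEq C r) (hY : Y ∈ P.wle b)
    (hYt : Y ∈ P.tEq C r) (f : X ⟶ Y) : f = 0 := by
  induction K, haK using Int.leInduction generalizing X with
  | base => exact P.eq_zero_of_wEq_of_wle hab ⟨hXle, hXge⟩ hXt hY hYt f
  | succ K haK ih =>
    obtain ⟨A, B, i, p, δ, hT, hAt, hBt, hAle, hBge⟩ := P.exists_weight_filtration K hXt
    have hBle : B ∈ P.wle (K + 1) := P.obj₃_mem_wle_of_distTriang K _ hT hAle hXle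
    have hAge : A ∈ P.wge a :=
      P.obj₁_mem_wge_of_distTriang a _ hT hXge (P.wge_antitone (by omega) hBge)
    obtain ⟨v, rfl⟩ := Triangle.yoneda_exact₂ _ hT f (ih hAge hAle hAt _)
    rw [P.eq_zero_of_wEq_of_wle (by omega) ⟨hBle, hBge⟩ hBt hY hYt v]; exact comp_zero

theorem eq_zero_of_wge_of_wle {a b : ℤ} (hab : b < a) {X Y : C} (hX : X ∈ P.wge a)
    (hXt : X ∈ P.tEq C r) (hY : Y ∈ P.wle b) (hYt : Y ∈ P.tEq C r) (f : X ⟶ Y) : f = 0 := by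
  obtain ⟨-, K, -, hK⟩ := P.w_bounded X
  exact P.eq_zero_of_wge_of_wle_of_wle (le_max_left a K) hab hX
    (P.wle_monotone (le_max_right a K) hK) hXt hY hYt f

theorem exists_comp_comp_eq_self_of_wEq_of_tEq {n : ℤ} {X Y : C} (hXw : X ∈ P.wEq C n)
    (hXt : X ∈ P.tEq C r) (hYw : Y ∈ P.wEq C n) (hYt : Y ∈ P.tEq C r) (φ : X ⟶ Y) :
    ∃ ψ : Y ⟶ X, φ ≫ ψ ≫ φ = φ := by
  let := P.wt_abelian n r
  obtain ⟨ψ, hψ⟩ := exists_comp_comp_eq_self (P.wt_semisimple n r)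
    (ObjectProperty.homMk φ : (⟨X, hXw, hXt⟩ : ObjectProperty.FullSubcategory _) ⟶ ⟨Y, hYw, hYt⟩)
  exact ⟨ψ.hom, congrArg InducedCategory.Hom.hom hψ⟩

end TransversalPackage

end Weights

universe v u

variable (C : Type u) [Category.{v} C] [Preadditive C] [HasZeroObject C]
  [HasShift C ℤ] [∀ n : ℤ, (shiftFunctor C n).Additive] [Pretriangulated C]
  [HasFiniteBiproducts C]

/-- Claim (∗) in the proof of Theorem 1.F: given a bounded weight structure `w` and a bounded
t-structure `t` on `C` satisfying the transversality properties (a)–(d), if `M ∈ C^{t=r} ∩ C_{w≥n}`,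
`N ∈ C^{t=r} ∩ C_{w≤n}` and `γ : M ⟶ N` is nonzero, then there exists `β : N ⟶ M` such that
`β ∘ γ` is a nonzero idempotent endomorphism of `M`; in particular `γ ∉ rad_C(M, N)`. -/
theorem claim_star (P : TransversalPackage C) (r n : ℤ) (M N : C)
    (hMt : M ∈ P.tle r) (hMt' : M ∈ P.tge r) (hMw : M ∈ P.wge n)
    (hNt : N ∈ P.tle r) (hNt' : N ∈ P.tge r) (hNw : N ∈ P.wle n)
    (γ : M ⟶ N) (hγ : γ ≠ 0) :
    (∃ β : N ⟶ M, (γ ≫ β) ≫ (γ ≫ β) = γ ≫ β ∧ γ ≫ β ≠ 0) ∧ γ ∉ radical M N := by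
  obtain ⟨M', M'', fM, gM, δM, hTM, hM't, hM''t, hM'le, hM''ge⟩ :=
    P.exists_weight_filtration n (X := M) ⟨hMt, hMt'⟩
  obtain ⟨N', N'', fN, gN, δN, hTN, hN't, hN''t, hN'le, hN''ge⟩ :=
    P.exists_weight_filtration (n - 1) (X := N) ⟨hNt, hNt'⟩
  rw [sub_add_cancel] at hN''ge
  have hM'ge : M' ∈ P.wge n := P.obj₁_mem_wge_of_distTriang n _ hTM hMw hM''ge
  have hN''le : N'' ∈ P.wle n := by
    simpa using P.obj₃_mem_wle_of_distTriang (n - 1) _ hTN hN'le (by simpa using hNw)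
  have hφ : fM ≫ γ ≫ gN ≠ 0 := by
    intro h
    obtain ⟨u, hu⟩ := Triangle.yoneda_exact₂ _ hTM (γ ≫ gN) h
    have hγgN : γ ≫ gN = 0 := hu.trans <| by
      rw [P.eq_zero_of_wge_of_wle (lt_add_one n) hM''ge hM''t hN''le hN''t u]
      exact comp_zero
    obtain ⟨v, rfl⟩ := Triangle.coyoneda_exact₂ _ hTN γ hγgN
    apply hγ
    rw [P.eq_zero_of_wge_of_wle (sub_one_lt n) hMw ⟨hMt, hMt'⟩ hN'le hN't v]
    exact zero_comp
  obtain ⟨ψ, hψ⟩ := P.exists_comp_comp_eq_self_of_wEq_of_tEq ⟨hM'le, hM'ge⟩ hM't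
    ⟨hN''le, hN''ge⟩ hN''t (fM ≫ γ ≫ gN)
  obtain ⟨β, hidem, hne⟩ := exists_idempotent_ne_zero_of_comp_comp_eq_self hψ hφ
  exact ⟨⟨β, hidem, hne⟩, not_mem_radical_of_idempotent hidem hne⟩

end Absolute
end

section
/- Let C be a triangulated category carrying a bounded weight structure w and a bounded t-structure t satisfying the transversality properties (a)–(d). Then the heart C_{w=0} of the weight structure is pseudo-abelian (idempotent complete): every idempotent endomorphism e of an object M of C_{w=0} admits a kernel in C_{w=0}, and M decomposes in C_{w=0} as the direct sum of the kernel of e and the kernel of id_M − e. (Corollary 1.Ca (a), pseudo-abelianness) -/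
/-!
By (a), an object of `C_{w=0}` is a finite direct sum of objects `Y_i` of the abelian categories
`C_{w=0}^{t=m_i}`. Gather the summands of maximal t-degree `c` into `X`, itself in
`C_{w=0}^{t=c}`, and the others into `N`. As `Hom(C^{t≤c-1}, C^{t≥c}) = 0` there are no maps
`N ⟶ X`, so an idempotent of `X ⊞ N` is upper triangular, hence conjugate to a diagonal one whose
entries split: on `X` because abelian categories are idempotent complete, on `N` by induction on
the number of summands. The image of a split idempotent of `M` is a retract of `M`, so it stays in
`C_{w=0}`; the splittings of `e` and `𝟙 - e` give the two kernels.
-/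

open CategoryTheory Limits Pretriangulated ZeroObject

namespace Absolute

universe v u

variable (C : Type u) [Category.{v} C] [Preadditive C] [HasZeroObject C]
  [HasShift C ℤ] [∀ n : ℤ, (shiftFunctor C n).Additive] [Pretriangulated C]

variable [HasFiniteBiproducts C]

section SplitIdempotents

variable {D : Type*} [Category* D]

def IsSplitIdempotent {X : D} (p : X ⟶ X) : Prop :=
  ∃ (Y : D) (i : Y ⟶ X) (r : X ⟶ Y), i ≫ r = 𝟙 Y ∧ r ≫ i = p

def SplitsIdempotents (X : D) : Prop :=
  ∀ p : X ⟶ X, p ≫ p = p → IsSplitIdempotent p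

lemma SplitsIdempotents.of_iso {X X' : D} (φ : X ≅ X') (hX : SplitsIdempotents X) :
    SplitsIdempotents X' := fun p hp =>
  Idempotents.split_imp_of_iso φ (φ.hom ≫ p ≫ φ.inv) p (by simp)
    (hX _ (by simp [reassoc_of% hp]))

lemma splitsIdempotents_of_isZero {X : D} (hX : IsZero X) : SplitsIdempotents X :=
  fun p _ => ⟨X, 𝟙 X, 𝟙 X, by simp, hX.eq_of_src _ _⟩

lemma ObjectProperty.splitsIdempotents_of_isIdempotentComplete {Z : ObjectProperty D}
    [IsIdempotentComplete Z.FullSubcategory] {X : D} (hX : Z X) : SplitsIdempotents X := by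
  intro p hp
  obtain ⟨Y, i, r, hir, hri⟩ := IsIdempotentComplete.idempotents_split
    (⟨X, hX⟩ : Z.FullSubcategory) (ObjectProperty.homMk p) (by ext; exact hp)
  exact ⟨Y.obj, i.hom, r.hom, congrArg (·.hom) hir, congrArg (·.hom) hri⟩

lemma ObjectProperty.FullSubcategory.splitsIdempotents {Z : ObjectProperty D}
    (hZ : ∀ ⦃X Y : D⦄ (i : X ⟶ Y) (r : Y ⟶ X), i ≫ r = 𝟙 X → Z Y → Z X)
    {X : Z.FullSubcategory} (hX : SplitsIdempotents X.obj) : SplitsIdempotents X := by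
  intro p hp
  obtain ⟨Y, i, r, hir, hri⟩ := hX p.hom (congrArg (·.hom) hp)
  exact ⟨⟨Y, hZ i r hir X.property⟩, ObjectProperty.homMk i, ObjectProperty.homMk r,
    by ext; exact hir, by ext; exact hri⟩

variable [Preadditive D]

lemma isLimit_kernelFork_of_comp_eq_id_sub {K M : D} {i : K ⟶ M} {r : M ⟶ K} {p : M ⟶ M}
    (hir : i ≫ r = 𝟙 K) (hri : r ≫ i = 𝟙 M - p) :
    ∃ w : i ≫ p = 0, Nonempty (IsLimit (KernelFork.ofι i w)) := by
  have hip : i ≫ p = 0 := by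
    have h : i ≫ (𝟙 M - p) = i := by rw [← hri, reassoc_of% hir]
    rwa [Preadditive.comp_sub, Category.comp_id, sub_eq_self] at h
  refine ⟨hip, ⟨KernelFork.IsLimit.ofι _ _ (fun g _ => g ≫ r) (fun g hg => ?_) ?_⟩⟩
  · rw [Category.assoc, hri, Preadditive.comp_sub, hg, Category.comp_id, sub_zero]
  · intro T g _ m hm
    rw [← hm, Category.assoc, hir, Category.comp_id]

variable [HasBinaryBiproducts D]

lemma IsSplitIdempotent.biprod_map {X N : D} {a : X ⟶ X} {d : N ⟶ N}
    (ha : IsSplitIdempotent a) (hd : IsSplitIdempotent d) :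
    IsSplitIdempotent (biprod.map a d) := by
  obtain ⟨K, i, r, hir, hri⟩ := ha
  obtain ⟨K', i', r', hir', hri'⟩ := hd
  exact ⟨K ⊞ K', biprod.map i i', biprod.map r r',
    by ext <;> simp [reassoc_of% hir, reassoc_of% hir'],
    by ext <;> simp [reassoc_of% hri, reassoc_of% hri']⟩

/-- An idempotent with vanishing lower-left entry, `(a b; 0 d)`, is conjugate by the unipotent
matrix `(1 h; 0 1)`, `h = a b - b d`, to the diagonal `(a 0; 0 d)`. -/
lemma IsSplitIdempotent.of_inr_comp_fst_eq_zero {X N : D} (hX : SplitsIdempotents X)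
    (hN : SplitsIdempotents N) {e : X ⊞ N ⟶ X ⊞ N} (he : e ≫ e = e)
    (h0 : biprod.inr ≫ e ≫ biprod.fst = 0) : IsSplitIdempotent e := by
  set a : X ⟶ X := biprod.inl ≫ e ≫ biprod.fst
  set b : X ⟶ N := biprod.inl ≫ e ≫ biprod.snd
  set d : N ⟶ N := biprod.inr ≫ e ≫ biprod.snd
  have he_eq : e = Biprod.ofComponents a b 0 d := by
    rw [← h0]
    exact (Biprod.ofComponents_eq e).symm
  rw [he_eq, Biprod.ofComponents_comp] at he
  have haa : a ≫ a = a := by simpa using congrArg (biprod.inl ≫ · ≫ biprod.fst) he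
  have hdd : d ≫ d = d := by simpa using congrArg (biprod.inr ≫ · ≫ biprod.snd) he
  have hb : a ≫ b + b ≫ d = b := by simpa using congrArg (biprod.inl ≫ · ≫ biprod.snd) he
  have habd : a ≫ b ≫ d = 0 := by
    have h := congrArg (a ≫ ·) hb
    simp only [Preadditive.comp_add, reassoc_of% haa] at h
    simpa using h
  let u := Biprod.unipotentUpper (a ≫ b - b ≫ d)
  have hconj : biprod.map a d ≫ u.hom = u.hom ≫ e := by
    rw [he_eq]
    ext <;> simp [u, reassoc_of% haa, habd, reassoc_of% hdd]
    rw [← sub_eq_add_neg, eq_sub_iff_add_eq, hb]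
  exact Idempotents.split_imp_of_iso u _ e hconj ((hX a haa).biprod_map (hN d hdd))

end SplitIdempotents

section Biproducts

variable {D : Type*} [Category* D] [Preadditive D] [HasFiniteBiproducts D]

noncomputable def biproduct.isoBiprodSubtype [HasBinaryBiproducts D] {ι : Type*} [Finite ι]
    (f : ι → D) (p : ι → Prop) [DecidablePred p] :
    ⨁ f ≅ (⨁ Subtype.restrict p f) ⊞ (⨁ Subtype.restrict (fun i => ¬p i) f) :=
  biprod.uniqueUpToIso _ _ <| isBinaryBilimitOfTotal
    { pt := ⨁ f
      fst := biproduct.toSubtype f p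
      snd := biproduct.toSubtype f fun i => ¬p i
      inl := biproduct.fromSubtype f p
      inr := biproduct.fromSubtype f fun i => ¬p i
      inl_snd := by
        refine biproduct.hom_ext' _ _ fun j => ?_
        rw [← Category.assoc, biproduct.ι_fromSubtype]
        erw [biproduct.ι_toSubtype]
        exact (dif_neg (not_not.mpr j.2)).trans comp_zero.symm
      inr_fst := by
        refine biproduct.hom_ext' _ _ fun j => ?_
        rw [← Category.assoc, biproduct.ι_fromSubtype]
        erw [biproduct.ι_toSubtype]
        exact (dif_neg j.2).trans comp_zero.symm }
    (by ext i; by_cases h : p i <;> simp [h])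

lemma ObjectProperty.prop_biproduct {Z : ObjectProperty D} [Z.IsClosedUnderIsomorphisms]
    [HasFiniteProducts Z.FullSubcategory] {ι : Type*} [Finite ι] (f : ι → D)
    (hf : ∀ i, Z (f i)) : Z (⨁ f) := by
  let F : ι → Z.FullSubcategory := fun i => ⟨f i, hf i⟩
  let q (i : ι) : (∏ᶜ F).obj ⟶ f i := (Pi.π F i).hom
  let j (i : ι) : f i ⟶ (∏ᶜ F).obj :=
    (Pi.lift fun k => ObjectProperty.homMk (biproduct.ι f i ≫ biproduct.π f k) : F i ⟶ ∏ᶜ F).hom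
  have hjq (i k : ι) : j i ≫ q k = biproduct.ι f i ≫ biproduct.π f k := by
    simp [j, q, ← ObjectProperty.FullSubcategory.comp_hom]
  have hdq (k : ι) : biproduct.desc j ≫ q k = biproduct.π f k := by
    ext i
    simp [hjq]
  refine Z.prop_of_iso (Iso.symm ⟨biproduct.desc j, biproduct.lift q, ?_, ?_⟩) (∏ᶜ F).property
  · ext i k
    simp [hjq]
  · refine congrArg (·.hom) <| Pi.hom_ext
      (ObjectProperty.homMk (biproduct.lift q ≫ biproduct.desc j)) (𝟙 (∏ᶜ F)) fun k => ?_
    ext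
    simp only [ObjectProperty.FullSubcategory.comp_hom, ObjectProperty.homMk_hom, Category.assoc,
      Category.id_comp]
    exact (congrArg _ (hdq k)).trans (biproduct.lift_π q k)

end Biproducts

lemma BoundedTStructure.hom_eq_zero_of_lt {C : Type u} [Category.{v} C] [Preadditive C]
    [HasZeroObject C] [HasShift C ℤ] [∀ n : ℤ, (shiftFunctor C n).Additive] [Pretriangulated C]
    (t : BoundedTStructure C) {p q : ℤ} (hpq : p < q) {X Y : C} (hX : X ∈ t.tle p)
    (hY : Y ∈ t.tge q) (f : X ⟶ Y) : f = 0 := by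
  have hX' : X⟦p⟧ ∈ t.tle 0 := by simpa using (t.tle_shift p p X).mp hX
  have hY' : Y⟦p⟧ ∈ t.tge 1 :=
    antitone_int_of_succ_le t.tge_anti (by omega : 1 ≤ q - p) ((t.tge_shift q p Y).mp hY)
  apply (shiftFunctor C p).map_injective
  simpa using t.t_orth hX' hY' ((shiftFunctor C p).map f)

section Transversal

variable {C} (P : TransversalPackage C)

/-- The category `C_{w=0}^{t=c}` of condition (a). -/
def TransversalPackage.wHeartTEq (c : ℤ) : ObjectProperty C :=
  fun X => (X ∈ P.wle 0 ∧ X ∈ P.wge 0) ∧ (X ∈ P.tle c ∧ X ∈ P.tge c)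

instance (c : ℤ) : (P.wHeartTEq c).IsClosedUnderIsomorphisms where
  of_iso e h :=
    ⟨⟨P.wle_iso 0 e h.1.1, P.wge_iso 0 e h.1.2⟩, ⟨P.tle_iso c e h.2.1, P.tge_iso c e h.2.2⟩⟩

lemma TransversalPackage.splitsIdempotents_of_wHeartTEq {c : ℤ} {X : C} (hX : P.wHeartTEq c X) :
    SplitsIdempotents X :=
  have : Abelian (P.wHeartTEq c).FullSubcategory := P.wt_abelian 0 c
  ObjectProperty.splitsIdempotents_of_isIdempotentComplete hX

lemma TransversalPackage.wHeartTEq_biproduct {c : ℤ} {ι : Type*} [Finite ι] (Y : ι → C)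
    (hY : ∀ i, P.wHeartTEq c (Y i)) : P.wHeartTEq c (⨁ Y) :=
  have : Abelian (P.wHeartTEq c).FullSubcategory := P.wt_abelian 0 c
  ObjectProperty.prop_biproduct Y hY

lemma TransversalPackage.splitsIdempotents_biproduct {ι : Type*} [Finite ι] (Y : ι → C)
    (m : ι → ℤ) (hY : ∀ i, P.wHeartTEq (m i) (Y i)) : SplitsIdempotents (⨁ Y) := by
  induction hn : Nat.card ι using Nat.strong_induction_on generalizing ι with
  | _ n ih =>
    rcases isEmpty_or_nonempty ι with hι | hι
    · refine splitsIdempotents_of_isZero ?_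
      rw [IsZero.iff_id_eq_zero]
      ext i
      exact isEmptyElim i
    classical
    obtain ⟨i₀, hi₀⟩ := Finite.exists_max m
    let p (i : ι) : Prop := m i = m i₀
    have hX : P.wHeartTEq (m i₀) (⨁ Subtype.restrict p Y) :=
      P.wHeartTEq_biproduct _ fun i => i.2 ▸ hY i
    have hN : SplitsIdempotents (⨁ Subtype.restrict (fun i => ¬p i) Y) :=
      ih _ (hn ▸ Finite.card_subtype_lt (not_not.mpr rfl)) _ (fun i => m i) (fun i => hY i) rfl
    have hNX (g : ⨁ Subtype.restrict (fun i => ¬p i) Y ⟶ ⨁ Subtype.restrict p Y) : g = 0 :=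
      biproduct.hom_ext' _ _ fun i => (P.hom_eq_zero_of_lt (lt_of_le_of_ne (hi₀ i) i.2)
        (hY i).2.1 hX.2.2 _).trans comp_zero.symm
    exact SplitsIdempotents.of_iso (biproduct.isoBiprodSubtype Y p).symm fun e he =>
      IsSplitIdempotent.of_inr_comp_fst_eq_zero (P.splitsIdempotents_of_wHeartTEq hX) hN he (hNX _)

lemma TransversalPackage.splitsIdempotents_of_mem_wHeart {M : C}
    (hM : M ∈ P.wle 0 ∧ M ∈ P.wge 0) : SplitsIdempotents M := by
  obtain ⟨k, Y, m, hY, ⟨φ⟩⟩ := P.wheart_sum M hM.1 hM.2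
  exact (P.splitsIdempotents_biproduct Y m hY).of_iso φ.symm

end Transversal

/-- Corollary 1.Ca (a), pseudo-abelianness of the heart: given a bounded weight structure `w`
and a bounded t-structure `t` on `C` satisfying the transversality properties (a)–(d), every
idempotent endomorphism `e` of an object `M` of the heart `C_{w=0}` admits a kernel in
`C_{w=0}`, and `M` decomposes in `C_{w=0}` as the direct sum of the kernel of `e` and the
kernel of `𝟙 M - e`. -/
theorem corollary_1Ca_pseudoabelian (P : TransversalPackage C)
    (M : C) (hM : M ∈ P.wle 0 ∧ M ∈ P.wge 0)
    (e : (⟨M, hM⟩ : ObjectProperty.FullSubcategory (fun X : C => X ∈ P.wle 0 ∧ X ∈ P.wge 0)) ⟶ ⟨M, hM⟩)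
    (he : e ≫ e = e) :
    ∃ (K K' : ObjectProperty.FullSubcategory (fun X : C => X ∈ P.wle 0 ∧ X ∈ P.wge 0))
      (ι : K ⟶ ⟨M, hM⟩)
      (ρ : (⟨M, hM⟩ : ObjectProperty.FullSubcategory (fun X : C => X ∈ P.wle 0 ∧ X ∈ P.wge 0)) ⟶ K)
      (ι' : K' ⟶ ⟨M, hM⟩)
      (ρ' : (⟨M, hM⟩ : ObjectProperty.FullSubcategory (fun X : C => X ∈ P.wle 0 ∧ X ∈ P.wge 0)) ⟶ K'),
      (∃ w : ι ≫ e = 0, Nonempty (IsLimit (KernelFork.ofι ι w))) ∧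
      (∃ w' : ι' ≫ (𝟙 (⟨M, hM⟩ : ObjectProperty.FullSubcategory
          (fun X : C => X ∈ P.wle 0 ∧ X ∈ P.wge 0)) - e) = 0,
        Nonempty (IsLimit (KernelFork.ofι ι' w'))) ∧
      ι ≫ ρ = 𝟙 K ∧ ι' ≫ ρ' = 𝟙 K' ∧
      ρ ≫ ι + ρ' ≫ ι' =
        𝟙 (⟨M, hM⟩ : ObjectProperty.FullSubcategory (fun X : C => X ∈ P.wle 0 ∧ X ∈ P.wge 0)) := by
  have hsplit : SplitsIdempotents (⟨M, hM⟩ : ObjectProperty.FullSubcategory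
      (fun X : C => X ∈ P.wle 0 ∧ X ∈ P.wge 0)) :=
    ObjectProperty.FullSubcategory.splitsIdempotents
      (fun _ _ i r hir hY => ⟨P.wle_summand 0 i r hir hY.1, P.wge_summand 0 i r hir hY.2⟩)
      (P.splitsIdempotents_of_mem_wHeart hM)
  obtain ⟨K, s, r, hsr, hrs⟩ := hsplit (𝟙 _ - e) (Idempotents.idem_of_id_sub_idem e he)
  obtain ⟨K', s', r', hsr', hrs'⟩ := hsplit e he
  exact ⟨K, K', s, r, s', r', isLimit_kernelFork_of_comp_eq_id_sub hsr hrs,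
    isLimit_kernelFork_of_comp_eq_id_sub hsr' (by rw [hrs', sub_sub_cancel]), hsr, hsr',
    by rw [hrs, hrs', sub_add_cancel]⟩

end Absolute
end

section
/- Let C be an F-linear additive category over a field F. Let d : M₁ → M₂ and f : M₂ → M₁ be morphisms such that every morphism from M₂ to M₁ is a scalar multiple of f (i.e., Hom_C(M₂, M₁) = F·f), and such that f∘d = c·e for some scalar c ∈ F and some idempotent endomorphism e of M₁. Then d belongs to the radical rad_C(M₁, M₂) if and only if f∘d = 0. (Abstract core of Theorem 4.F (a): with d corresponding to the Lefschetz operator and Hom(M₂,M₁) generated by the class of Z×Z, membership of d in the radical is equivalent to the vanishing of the self-intersection number Z·Z.) -/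
/-!
If `d` is in the radical and `f ∘ d = c • e` with `c ≠ 0`, then `𝟙 - d ≫ c⁻¹ • f = 𝟙 - e` is
invertible; an idempotent `e` with `𝟙 - e` invertible vanishes, since `e ≫ (𝟙 - e) = 0`.
Conversely, if `f ∘ d = 0` then `d` composes to zero with every multiple of `f`, i.e. with
every morphism `M₂ ⟶ M₁`, so each `𝟙 - d ≫ β` is the identity.
-/

open CategoryTheory Limits

namespace Absolute

universe v u

section Preadditive

variable {C : Type u} [Category.{v} C] [Preadditive C] {M N : C}

theorem eq_zero_of_idem_of_isIso_id_sub {e : M ⟶ M} (he : e ≫ e = e) [IsIso (𝟙 M - e)] :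
    e = 0 := by
  have h : e ≫ (𝟙 M - e) = 0 := by
    rw [Preadditive.comp_sub, Category.comp_id, he, sub_self]
  calc e = e ≫ (𝟙 M - e) ≫ inv (𝟙 M - e) := by rw [IsIso.hom_inv_id, Category.comp_id]
    _ = 0 := by rw [← Category.assoc, h, zero_comp]

theorem mem_radical_of_forall_comp_eq_zero {d : M ⟶ N} (hd : ∀ β : N ⟶ M, d ≫ β = 0) :
    d ∈ radical M N := by
  intro β
  rw [hd β, sub_zero]
  infer_instance

end Preadditive

section Linear

variable {F : Type*} [Field F] {C : Type u} [Category.{v} C] [Preadditive C] [Linear F C]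
  {M N : C}

theorem comp_eq_zero_of_mem_radical {d : M ⟶ N} (hd : d ∈ radical M N) {f : N ⟶ M} {c : F}
    {e : M ⟶ M} (he : e ≫ e = e) (hfd : d ≫ f = c • e) : d ≫ f = 0 := by
  rcases eq_or_ne c 0 with rfl | hc
  · rw [hfd, zero_smul]
  have hsub : 𝟙 M - d ≫ (c⁻¹ • f) = 𝟙 M - e := by
    rw [Linear.comp_smul, hfd, smul_smul, inv_mul_cancel₀ hc, one_smul]
  have : IsIso (𝟙 M - e) := hsub ▸ hd (c⁻¹ • f)
  rw [hfd, eq_zero_of_idem_of_isIso_id_sub he, smul_zero]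

end Linear

theorem theorem_4Fa_core_general {F : Type*} [Field F] {C : Type u} [Category.{v} C]
    [Preadditive C] [CategoryTheory.Linear F C]
    {M₁ M₂ : C} (d : M₁ ⟶ M₂) (f : M₂ ⟶ M₁)
    (hgen : ∀ g : M₂ ⟶ M₁, ∃ a : F, g = a • f)
    (c : F) (e : M₁ ⟶ M₁) (he : e ≫ e = e) (hfd : d ≫ f = c • e) :
    d ∈ radical M₁ M₂ ↔ d ≫ f = 0 := by
  refine ⟨fun hd => comp_eq_zero_of_mem_radical hd he hfd, fun h => ?_⟩
  refine mem_radical_of_forall_comp_eq_zero fun β => ?_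
  obtain ⟨a, rfl⟩ := hgen β
  rw [Linear.comp_smul, h, smul_zero]

/-- Abstract core of Theorem 4.F (a): in an `F`-linear additive category over a field `F`,
let `d : M₁ ⟶ M₂` and `f : M₂ ⟶ M₁` be such that every morphism `M₂ ⟶ M₁` is a scalar
multiple of `f`, and such that `f ∘ d = c • e` for some scalar `c ∈ F` and some idempotent
endomorphism `e` of `M₁`. Then `d` belongs to the radical `rad_C(M₁, M₂)` if and only if
`f ∘ d = 0`. -/
theorem theorem_4Fa_core {F : Type*} [Field F] {C : Type u} [Category.{v} C]
    [Preadditive C] [HasFiniteBiproducts C] [CategoryTheory.Linear F C]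
    {M₁ M₂ : C} (d : M₁ ⟶ M₂) (f : M₂ ⟶ M₁)
    (hgen : ∀ g : M₂ ⟶ M₁, ∃ a : F, g = a • f)
    (c : F) (e : M₁ ⟶ M₁) (he : e ≫ e = e) (hfd : d ≫ f = c • e) :
    d ∈ radical M₁ M₂ ↔ d ≫ f = 0 :=
  theorem_4Fa_core_general d f hgen c e he hfd

end Absolute
end
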